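/- Let Δ > 0, L ≥ 0, and let D_Δ be a causal sample-based differentiator with sampling period Δ that is quasi-exact in finite time over F_L: for every R ≥ 0 there exists k_R ∈ ℕ such that |ḟ(ℓΔ) − [D_Δ f](ℓΔ)| ≤ L·Δ/2 for every f ∈ F_L^R and every ℓ ≥ k_R. Then for all R, N ≥ 0 and every r ∈ ℕ with r ≥ 1, there exist f ∈ F_L^R, η ∈ E_N, and an index ℓ ≥ r such that |ḟ(ℓΔ) − [D_Δ(f + η)](ℓΔ)| ≥ 2·√(2·N·L) − L·Δ/2. Consequently, the worst-case error of D_Δ from time rΔ over F_L^R with noise bound N satisfies M_N^{L,R}(rΔ) ≥ 2·√(2·N·L) − L·Δ/2. -/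

import Mathlib

/-!
On `[0, ℓΔ]` the noise `η = -2f` makes the samples of `f + η` those of `-f`. A causal
differentiator that is quasi-exact on `-f` therefore reports `-ḟ(ℓΔ)` up to `LΔ/2`, and errs
by at least `2ḟ(ℓΔ) - LΔ/2` on `f + η`. The constraints `|f| ≤ N/2` and `|f̈| ≤ L` still allow
`ḟ(ℓΔ) = √(2NL)`: take the bang-bang profile `f̈ = -L` for a time `a` and then `f̈ = L` for a
time `3a`, with `La² = N/2`, ending at `ℓΔ` for `ℓ` beyond `k_R`.
-/

open Set Filter Topology

/-- `f ∈ F_L`: `f : [0,∞) → ℝ` is differentiable with derivative `f'`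
that is Lipschitz continuous with constant `L` on `[0,∞)`. -/
def IsFL (L : ℝ) (f f' : ℝ → ℝ) : Prop :=
  (∀ t ∈ Set.Ici (0:ℝ), HasDerivWithinAt f (f' t) (Set.Ici 0) t) ∧
  ∀ s ∈ Set.Ici (0:ℝ), ∀ t ∈ Set.Ici (0:ℝ), |f' s - f' t| ≤ L * |s - t|

/-- `η ∈ E_N`: measurable noise bounded by `N` on `[0,∞)`. -/
def IsEN (N : ℝ) (η : ℝ → ℝ) : Prop :=
  Measurable η ∧ ∀ t ∈ Set.Ici (0:ℝ), |η t| ≤ N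

/-- `f ∈ F_L^R`: member of `F_L` with `|f(0)| ≤ R` and `|ḟ(0)| ≤ R`. -/
def IsFLR (L R : ℝ) (f f' : ℝ → ℝ) : Prop :=
  IsFL L f f' ∧ |f 0| ≤ R ∧ |f' 0| ≤ R

/-- A differentiator is causal if its output at time `T` depends only on the
input on `[0, T]`. -/
def Causal (D : (ℝ → ℝ) → ℝ → ℝ) : Prop :=
  ∀ u₁ u₂ T, (∀ t ∈ Set.Icc (0:ℝ) T, u₁ t = u₂ t) → D u₁ T = D u₂ T

/-- A sample-based differentiator with sampling period `Δ` is causal if its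
output at step `k` depends only on the samples `u(jΔ)` for `j ≤ k`. -/
def SampleCausal (Δ : ℝ) (D : (ℝ → ℝ) → ℕ → ℝ) : Prop :=
  ∀ u₁ u₂ : ℝ → ℝ, ∀ k : ℕ,
    (∀ j : ℕ, j ≤ k → u₁ (j * Δ) = u₂ (j * Δ)) → D u₁ k = D u₂ k

theorem HasDerivAt.ite_le {E : Type*} [NormedAddCommGroup E] [NormedSpace ℝ E]
    {p q p' q' : ℝ → E} {m : ℝ} (hp : ∀ t, HasDerivAt p (p' t) t)
    (hq : ∀ t, HasDerivAt q (q' t) t) (hpq : p m = q m) (hpq' : p' m = q' m) (t : ℝ) :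
    HasDerivAt (fun x => if x ≤ m then p x else q x) (if t ≤ m then p' t else q' t) t := by
  rcases lt_trichotomy t m with ht | rfl | ht
  · rw [if_pos ht.le]
    refine (hp t).congr_of_eventuallyEq ?_
    filter_upwards [Iio_mem_nhds ht] with x hx using if_pos hx.le
  · rw [if_pos le_rfl]
    have hleft : HasDerivWithinAt (fun x => if x ≤ t then p x else q x) (p' t) (Iic t) t :=
      (hp t).hasDerivWithinAt.congr (fun x hx => if_pos hx) (if_pos le_rfl)
    have hright : HasDerivWithinAt (fun x => if x ≤ t then p x else q x) (p' t) (Ici t) t := by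
      refine hpq' ▸ (hq t).hasDerivWithinAt.congr (fun x hx => ?_) (by simp [hpq])
      rcases (mem_Ici.1 hx).eq_or_lt with rfl | hlt
      · simp [hpq]
      · simp [not_le.2 hlt]
    simpa [Iic_union_Ici] using hleft.union hright
  · rw [if_neg (not_le.2 ht)]
    refine (hq t).congr_of_eventuallyEq ?_
    filter_upwards [Ioi_mem_nhds ht] with x hx using if_neg (not_le.2 hx)

theorem IsFLR.neg {L R : ℝ} {f f' : ℝ → ℝ} (h : IsFLR L R f f') : IsFLR L R (-f) (-f') := by
  obtain ⟨⟨hderiv, hlip⟩, hf0, hf'0⟩ := h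
  refine ⟨⟨fun t ht => (hderiv t ht).neg, fun s hs t ht => ?_⟩, ?_, ?_⟩
  · have h := hlip s hs t ht
    rwa [abs_sub_comm, ← neg_sub_neg] at h
  · simpa using hf0
  · simpa using hf'0

theorem SampleCausal.exists_noise_error_ge {Δ L R N : ℝ} {D : (ℝ → ℝ) → ℕ → ℝ}
    (hD : SampleCausal Δ D) (hΔ : 0 ≤ Δ) {ℓ : ℕ}
    (hexact : ∀ g g' : ℝ → ℝ, IsFLR L R g g' → |g' (ℓ * Δ) - D g ℓ| ≤ L * Δ / 2)
    {f f' : ℝ → ℝ} (hf : IsFLR L R f f') (hcont : Continuous f) (hN : 0 ≤ N)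
    (hamp : ∀ t ∈ Icc 0 (ℓ * Δ), |f t| ≤ N / 2) :
    ∃ η : ℝ → ℝ, IsEN N η ∧
      2 * f' (ℓ * Δ) - L * Δ / 2 ≤ |f' (ℓ * Δ) - D (f + η) ℓ| := by
  set T : ℝ := ℓ * Δ
  refine ⟨fun t => if t ≤ T then -2 * f t else 0, ⟨?_, fun t ht => ?_⟩, ?_⟩
  · exact Measurable.ite measurableSet_Iic (hcont.measurable.const_mul _) measurable_const
  · dsimp only
    split_ifs with htT
    · rw [abs_mul, abs_neg, abs_two]
      linarith [hamp t ⟨ht, htT⟩]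
    · simpa using hN
  · have hsamples : D (f + fun t => if t ≤ T then -2 * f t else 0) ℓ = D (-f) ℓ := by
      refine hD _ _ ℓ fun j hj => ?_
      have hjT : (j : ℝ) * Δ ≤ T := mul_le_mul_of_nonneg_right (by exact_mod_cast hj) hΔ
      simp only [Pi.add_apply, Pi.neg_apply, if_pos hjT]
      ring
    have hneg := abs_le.1 (hexact _ _ hf.neg)
    simp only [Pi.neg_apply] at hneg
    rw [hsamples]
    linarith [le_abs_self (f' T - D (-f) ℓ)]

noncomputable def bangBang (L a t : ℝ) : ℝ :=
  if t ≤ 0 then 0 else if t ≤ a then -(L * t ^ 2 / 2) else L * (t - 2 * a) ^ 2 / 2 - L * a ^ 2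

noncomputable def bangBangDeriv (L a t : ℝ) : ℝ :=
  if t ≤ 0 then 0 else if t ≤ a then -(L * t) else L * (t - 2 * a)

section bangBang

variable {L a : ℝ}

theorem hasDerivAt_bangBang (ha : 0 ≤ a) (t : ℝ) :
    HasDerivAt (bangBang L a) (bangBangDeriv L a t) t := by
  have hdown (x : ℝ) : HasDerivAt (fun t => -(L * t ^ 2 / 2)) (-(L * x)) x :=
    ((((hasDerivAt_pow 2 x).const_mul L).div_const 2).fun_neg).congr_deriv (by norm_num; ring)
  have hup (x : ℝ) :
      HasDerivAt (fun t => L * (t - 2 * a) ^ 2 / 2 - L * a ^ 2) (L * (x - 2 * a)) x :=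
    ((((((hasDerivAt_id' x).sub_const (2 * a)).fun_pow 2).const_mul L).div_const 2).sub_const
      (L * a ^ 2)).congr_deriv (by norm_num; ring)
  have hpos (x : ℝ) := HasDerivAt.ite_le (m := a) hdown hup (by ring) (by ring) x
  exact HasDerivAt.ite_le (m := 0) (fun x => hasDerivAt_const x 0) hpos
    (by simp [ha]) (by simp [ha]) t

theorem abs_bangBangDeriv_sub_le (hL : 0 ≤ L) (ha : 0 ≤ a) (s t : ℝ) :
    |bangBangDeriv L a s - bangBangDeriv L a t| ≤ L * |s - t| := by
  wlog hst : s ≤ t generalizing s t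
  · rw [abs_sub_comm, abs_sub_comm s]
    exact this t s (le_of_not_ge hst)
  rw [abs_of_nonpos (sub_nonpos.2 hst), abs_le]
  unfold bangBangDeriv
  split_ifs <;> constructor <;> nlinarith

theorem abs_bangBang_le (hL : 0 ≤ L) (ha : 0 ≤ a) {t : ℝ} (ht : t ≤ 4 * a) :
    |bangBang L a t| ≤ L * a ^ 2 := by
  unfold bangBang
  rw [abs_le]
  split_ifs <;> constructor <;>
    nlinarith [mul_nonneg hL (sq_nonneg t), mul_nonneg hL (sq_nonneg (t - 2 * a))]

theorem bangBangDeriv_four_mul (ha : 0 ≤ a) : bangBangDeriv L a (4 * a) = 2 * L * a := by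
  unfold bangBangDeriv
  split_ifs
  · obtain rfl : a = 0 := by linarith
    ring
  · linarith
  · ring

theorem continuous_bangBang (ha : 0 ≤ a) : Continuous (bangBang L a) :=
  continuous_iff_continuousAt.2 fun t => (hasDerivAt_bangBang ha t).continuousAt

theorem isFLR_bangBang_comp_sub (hL : 0 ≤ L) (ha : 0 ≤ a) {c R : ℝ} (hc : 0 ≤ c) (hR : 0 ≤ R) :
    IsFLR L R (fun t => bangBang L a (t - c)) (fun t => bangBangDeriv L a (t - c)) := by
  have h0 : bangBang L a (-c) = 0 := if_pos (by linarith)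
  have h0' : bangBangDeriv L a (-c) = 0 := if_pos (by linarith)
  refine ⟨⟨fun t _ => ((hasDerivAt_bangBang ha (t - c)).comp_sub_const t c).hasDerivWithinAt,
    fun s _ t _ => ?_⟩, by simpa [h0] using hR, by simpa [h0'] using hR⟩
  simpa using abs_bangBangDeriv_sub_le hL ha (s - c) (t - c)

end bangBang

theorem exists_mul_sq_le_two_mul_mul_eq_sqrt {L N : ℝ} (hL : 0 ≤ L) (hN : 0 ≤ N) :
    ∃ a, 0 ≤ a ∧ L * a ^ 2 ≤ N / 2 ∧ 2 * L * a = √(2 * N * L) := by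
  rcases hL.eq_or_lt with rfl | hL
  · exact ⟨0, le_rfl, by simp; positivity, by simp⟩
  refine ⟨√(2 * N * L) / (2 * L), by positivity, le_of_eq ?_, by field_simp⟩
  rw [div_pow, Real.sq_sqrt (by positivity)]
  field_simp

theorem stmt19 (Δ L : ℝ) (hΔ : 0 < Δ) (hL : 0 ≤ L)
    (D : (ℝ → ℝ) → ℕ → ℝ) (hD : SampleCausal Δ D)
    (hquasi : ∀ R : ℝ, 0 ≤ R → ∃ kR : ℕ, ∀ f f' : ℝ → ℝ, IsFLR L R f f' →
      ∀ ℓ : ℕ, kR ≤ ℓ → |f' (ℓ * Δ) - D f ℓ| ≤ L * Δ / 2) :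
    ∀ R N : ℝ, 0 ≤ R → 0 ≤ N → ∀ r : ℕ, 1 ≤ r →
      ∃ (f f' η : ℝ → ℝ) (ℓ : ℕ), IsFLR L R f f' ∧ IsEN N η ∧ r ≤ ℓ ∧
        2 * Real.sqrt (2 * N * L) - L * Δ / 2 ≤ |f' (ℓ * Δ) - D (f + η) ℓ| := by
  intro R N hR hN r _
  obtain ⟨kR, hkR⟩ := hquasi R hR
  obtain ⟨a, ha, hamp, hslope⟩ := exists_mul_sq_le_two_mul_mul_eq_sqrt hL hN
  have hsamples : Tendsto (fun ℓ : ℕ => (ℓ : ℝ) * Δ) atTop atTop :=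
    tendsto_natCast_atTop_atTop.atTop_mul_const hΔ
  obtain ⟨ℓ, hrℓ, hkℓ, hℓ⟩ := ((eventually_ge_atTop r).and ((eventually_ge_atTop kR).and
    (hsamples.eventually_ge_atTop (4 * a)))).exists
  have hf := isFLR_bangBang_comp_sub hL ha (sub_nonneg.2 hℓ) hR
  obtain ⟨η, hη, herr⟩ := hD.exists_noise_error_ge hΔ.le (fun g g' hg => hkR g g' hg ℓ hkℓ) hf
    ((continuous_bangBang ha).comp (continuous_sub_right _)) hN
    fun t ht => (abs_bangBang_le hL ha (by linarith [ht.2])).trans hamp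
  refine ⟨_, _, η, ℓ, hf, hη, hrℓ, ?_⟩
  simpa only [sub_sub_cancel, bangBangDeriv_four_mul ha, hslope] using herr
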